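/- Let X = {G ∈ H^∞ : G(0) = 0, G'(0) = 1/2}, where H^∞ is the set of bounded holomorphic functions on the unit disc. If G ∈ X and G(𝔻) ⊆ Ω_γ for some γ with 1 < γ, then γ ≥ √2. Moreover γ = √2 is achievable, attained by G = F_{√2}, the conformal map of 𝔻 onto Ω_{√2} with F_{√2}(0) = 0 and F_{√2}'(0) = 1/2. -/

import Mathlib

/-!
For `γ ≤ √2` put `b = √(γ² - 1) ≤ 1`. The lens is `Ω_γ = {s : |s|² + 2 |Re s| < b²}`, which
lies in `b • Ω_{√2}`, and `s ↦ 2bs / (b² - s²)` maps `b • Ω_{√2}` into the unit disc with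
derivative `2 / b` at `0`. Schwarz's lemma then gives `|G'(0)| ≤ b / 2`, so `G'(0) = 1/2` is
impossible when `γ < √2`.

For the extremal map write `F_{√2}(w) = i (1 - q) / (1 + q)` with `q = √((1 + iw) / (1 - iw))`:
the Cayley transform sends the disc into the right half plane, the square root sends that into
the sector `|Im q| < Re q`, and `q ↦ i (1 - q) / (1 + q)` sends the sector into `Ω_{√2}`.
-/

open Complex Metric

/-- The open lens region Ω_γ = {s : |1 - s| < γ ∧ |1 + s| < γ}. -/
def lens (γ : ℝ) : Set ℂ := {s : ℂ | ‖1 - s‖ < γ ∧ ‖1 + s‖ < γ}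

/-- The conformal map F_γ (with cos α = 1/γ) of the unit disc onto the lens Ω_γ;
for γ = √2 take α = π/4. -/
noncomputable def Fmap (α : ℝ) (w : ℂ) : ℂ :=
  I * (Real.tan α : ℂ) *
    (1 - ((1 + I * w) / (1 - I * w)) ^ ((2 * α / Real.pi : ℝ) : ℂ)) /
    (1 + ((1 + I * w) / (1 - I * w)) ^ ((2 * α / Real.pi : ℝ) : ℂ))

lemma sq_norm_add_two_mul_abs_re_lt_of_mem_lens {γ : ℝ} {s : ℂ} (hs : s ∈ lens γ) :
    ‖s‖ ^ 2 + 2 * |s.re| < γ ^ 2 - 1 := by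
  obtain ⟨hsub, hadd⟩ := hs
  have hsub' : ‖1 - s‖ ^ 2 < γ ^ 2 := by gcongr
  have hadd' : ‖1 + s‖ ^ 2 < γ ^ 2 := by gcongr
  simp only [Complex.sq_norm, normSq_apply, sub_re, sub_im, add_re, add_im, one_re,
    one_im] at *
  rcases abs_cases s.re with ⟨h, _⟩ | ⟨h, _⟩ <;> rw [h] <;> nlinarith

lemma norm_lt_of_mem_lens {γ : ℝ} {s : ℂ} (hs : s ∈ lens γ) : ‖s‖ < γ := by
  have h2s : ‖(2 : ℂ) * s‖ ≤ ‖1 + s‖ + ‖1 - s‖ := by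
    simpa [two_mul, add_sub_sub_cancel] using norm_sub_le (1 + s) (1 - s)
  rw [norm_mul, Complex.norm_ofNat] at h2s
  linarith [hs.1, hs.2]

lemma norm_two_mul_mul_lt_norm_sq_sub_sq {b : ℝ} (hb0 : 0 < b) (hb1 : b ≤ 1) {s : ℂ}
    (hs : ‖s‖ ^ 2 + 2 * |s.re| < b ^ 2) : ‖2 * b * s‖ < ‖(b : ℂ) ^ 2 - s ^ 2‖ := by
  rw [← sq_lt_sq₀ (norm_nonneg _) (norm_nonneg _)]
  simp only [Complex.sq_norm, normSq_apply] at *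
  simp only [sub_re, sub_im, mul_re, mul_im, pow_two, ofReal_re, ofReal_im, re_ofNat,
    im_ofNat] at *
  have hbx : 2 * b * |s.re| ≤ 2 * |s.re| := by nlinarith [abs_nonneg s.re]
  have hneg₁ : s.re * s.re + s.im * s.im - 2 * b * s.re - b * b < 0 := by
    nlinarith [mul_le_mul_of_nonneg_left (neg_abs_le s.re) hb0.le]
  have hneg₂ : s.re * s.re + s.im * s.im + 2 * b * s.re - b * b < 0 := by
    nlinarith [mul_le_mul_of_nonneg_left (le_abs_self s.re) hb0.le]
  nlinarith [mul_pos_of_neg_of_neg hneg₁ hneg₂]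

/-- The conformal map of `b • Ω_{√2}` onto the unit disc. -/
noncomputable def lensToDisc (b : ℝ) (s : ℂ) : ℂ := 2 * b * s / (b ^ 2 - s ^ 2)

lemma norm_lensToDisc_lt_one {b : ℝ} (hb0 : 0 < b) (hb1 : b ≤ 1) {s : ℂ}
    (hs : ‖s‖ ^ 2 + 2 * |s.re| < b ^ 2) : ‖lensToDisc b s‖ < 1 := by
  have h := norm_two_mul_mul_lt_norm_sq_sub_sq hb0 hb1 hs
  rw [lensToDisc, norm_div, div_lt_one ((norm_nonneg _).trans_lt h)]
  exact h

lemma hasDerivAt_lensToDisc_zero {b : ℝ} (hb : b ≠ 0) :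
    HasDerivAt (lensToDisc b) (2 / b) 0 := by
  have hnum : HasDerivAt (fun s : ℂ => 2 * b * s) (2 * b) 0 := by
    simpa using (hasDerivAt_id (0 : ℂ)).const_mul (2 * (b : ℂ))
  have hden : HasDerivAt (fun s : ℂ => (b : ℂ) ^ 2 - s ^ 2) 0 0 := by
    simpa using ((hasDerivAt_id (0 : ℂ)).pow 2).const_sub ((b : ℂ) ^ 2)
  have hbC : (b : ℂ) ≠ 0 := ofReal_ne_zero.mpr hb
  refine (hnum.fun_div hden (by simpa using hb)).congr_deriv ?_
  field_simp
  ring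

lemma norm_deriv_le_of_mapsTo_lens {γ : ℝ} (hγ1 : 1 < γ) (hγ2 : γ ≤ √2) {G : ℂ → ℂ}
    (hd : DifferentiableOn ℂ G (ball 0 1)) (h0 : G 0 = 0)
    (hmem : Set.MapsTo G (ball 0 1) (lens γ)) :
    ‖deriv G 0‖ ≤ √(γ ^ 2 - 1) / 2 := by
  set b := √(γ ^ 2 - 1)
  have hb0 : 0 < b := Real.sqrt_pos.mpr (by nlinarith)
  have hb1 : b ≤ 1 := by
    rw [Real.sqrt_le_one]
    nlinarith [Real.sq_sqrt (zero_le_two : (0 : ℝ) ≤ 2)]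
  have hlens : ∀ s ∈ lens γ, ‖s‖ ^ 2 + 2 * |s.re| < b ^ 2 := fun s hs => by
    rw [Real.sq_sqrt (by nlinarith)]
    exact sq_norm_add_two_mul_abs_re_lt_of_mem_lens hs
  have hdiff : DifferentiableOn ℂ (lensToDisc b ∘ G) (ball 0 1) := by
    intro w hw
    have hden : (b : ℂ) ^ 2 - G w ^ 2 ≠ 0 := norm_pos_iff.mp
      ((norm_nonneg _).trans_lt (norm_two_mul_mul_lt_norm_sq_sub_sq hb0 hb1 (hlens _ (hmem hw))))
    have hφ : DifferentiableAt ℂ (lensToDisc b) (G w) :=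
      (by fun_prop : DifferentiableAt ℂ (fun s : ℂ => 2 * b * s) (G w)).div (by fun_prop) hden
    exact (hφ.comp w (hd.differentiableAt (isOpen_ball.mem_nhds hw))).differentiableWithinAt
  have hmaps :
      Set.MapsTo (lensToDisc b ∘ G) (ball 0 1) (closedBall ((lensToDisc b ∘ G) 0) 1) := by
    intro w hw
    rw [Function.comp_apply, h0, lensToDisc, mul_zero, zero_div, mem_closedBall_zero_iff]
    exact (norm_lensToDisc_lt_one hb0 hb1 (hlens _ (hmem hw))).le
  have hderiv : deriv (lensToDisc b ∘ G) 0 = 2 / b * deriv G 0 :=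
    ((hasDerivAt_lensToDisc_zero hb0.ne').comp_of_eq 0
      (hd.differentiableAt (isOpen_ball.mem_nhds (mem_ball_self one_pos))).hasDerivAt h0.symm).deriv
  have hschwarz := Complex.norm_deriv_le_div_of_mapsTo_ball hdiff hmaps one_pos
  rw [hderiv, norm_mul, norm_div, Complex.norm_ofNat, Complex.norm_real,
    Real.norm_of_nonneg hb0.le, div_one, div_mul_eq_mul_div, div_le_one hb0] at hschwarz
  linarith

noncomputable def toRightHalfPlane (w : ℂ) : ℂ := (1 + I * w) / (1 - I * w)

noncomputable def sectorToLens (q : ℂ) : ℂ := I * (1 - q) / (1 + q)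

lemma one_sub_I_mul_ne_zero {w : ℂ} (hw : ‖w‖ < 1) : 1 - I * w ≠ 0 := by
  intro h
  have : ‖I * w‖ = 1 := by rw [← sub_eq_zero.mp h, norm_one]
  rw [norm_mul, Complex.norm_I, one_mul] at this
  exact hw.ne this

lemma re_toRightHalfPlane_pos {w : ℂ} (hw : ‖w‖ < 1) : 0 < (toRightHalfPlane w).re := by
  have hw2 : w.re * w.re + w.im * w.im < 1 := by
    rw [← normSq_apply, ← Complex.sq_norm]; nlinarith [norm_nonneg w]
  rw [toRightHalfPlane, div_re, ← add_div]
  apply div_pos _ (normSq_pos.mpr (one_sub_I_mul_ne_zero hw))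
  simp only [add_re, add_im, sub_re, sub_im, mul_re, mul_im, one_re, one_im, I_re, I_im]
  nlinarith

lemma toRightHalfPlane_zero : toRightHalfPlane 0 = 1 := by simp [toRightHalfPlane]

lemma hasDerivAt_toRightHalfPlane_zero : HasDerivAt toRightHalfPlane (2 * I) 0 := by
  have hnum : HasDerivAt (fun w : ℂ => 1 + I * w) I 0 := by
    simpa using ((hasDerivAt_id (0 : ℂ)).const_mul I).const_add 1
  have hden : HasDerivAt (fun w : ℂ => 1 - I * w) (-I) 0 := by
    simpa using ((hasDerivAt_id (0 : ℂ)).const_mul I).const_sub 1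
  refine (hnum.fun_div hden (by simp)).congr_deriv ?_
  simp only [mul_zero, sub_zero, add_zero, one_pow, div_one]
  ring

lemma abs_im_lt_re_cpow_inv_two {z : ℂ} (hz : 0 < z.re) :
    |(z ^ (2⁻¹ : ℂ)).im| < (z ^ (2⁻¹ : ℂ)).re := by
  have hre : 0 ≤ (z ^ (2⁻¹ : ℂ)).re := by rw [cpow_inv_two_re]; positivity
  have hsq := cpow_ofNat_inv_pow z 2
  apply abs_lt_of_sq_lt_sq _ hre
  have : z.re = (z ^ (2⁻¹ : ℂ)).re ^ 2 - (z ^ (2⁻¹ : ℂ)).im ^ 2 := by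
    conv_lhs => rw [← hsq]
    simp [pow_two]
  linarith

lemma norm_one_pm_I_mul_lt_norm_one_add {q : ℂ} (hq : |q.im| < q.re) :
    ‖1 + I * q‖ < ‖1 + q‖ ∧ ‖1 - I * q‖ < ‖1 + q‖ := by
  obtain ⟨h₁, h₂⟩ := abs_lt.mp hq
  simp only [← sq_lt_sq₀ (norm_nonneg _) (norm_nonneg _), Complex.sq_norm, normSq_apply,
    add_re, add_im, sub_re, sub_im, mul_re, mul_im, one_re, one_im, I_re, I_im]
  constructor <;> nlinarith

lemma one_add_ne_zero_of_re_pos {q : ℂ} (hq : 0 < q.re) : 1 + q ≠ 0 := by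
  intro h
  have := congrArg re h
  rw [add_re, one_re, zero_re] at this
  linarith

lemma sectorToLens_mem_lens {q : ℂ} (hq : |q.im| < q.re) : sectorToLens q ∈ lens √2 := by
  have hq1 : 1 + q ≠ 0 := one_add_ne_zero_of_re_pos ((abs_nonneg _).trans_lt hq)
  have hpos : 0 < ‖1 + q‖ := norm_pos_iff.mpr hq1
  have hsub : 1 - sectorToLens q = (1 - I) * (1 + I * q) / (1 + q) := by
    rw [sectorToLens]; field_simp; linear_combination q * I_sq
  have hadd : 1 + sectorToLens q = (1 + I) * (1 - I * q) / (1 + q) := by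
    rw [sectorToLens]; field_simp; linear_combination q * I_sq
  have hnorm₁ : ‖1 - I‖ = √2 := by
    rw [Complex.norm_def, normSq_apply]; norm_num
  have hnorm₂ : ‖1 + I‖ = √2 := by
    rw [Complex.norm_def, normSq_apply]; norm_num
  obtain ⟨h₁, h₂⟩ := norm_one_pm_I_mul_lt_norm_one_add hq
  constructor
  · rw [hsub, norm_div, norm_mul, hnorm₁, div_lt_iff₀ hpos]
    gcongr
  · rw [hadd, norm_div, norm_mul, hnorm₂, div_lt_iff₀ hpos]
    gcongr

lemma hasDerivAt_sectorToLens_one : HasDerivAt sectorToLens (-I / 2) 1 := by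
  have hnum : HasDerivAt (fun q : ℂ => I * (1 - q)) (I * -1) 1 :=
    ((hasDerivAt_id (1 : ℂ)).const_sub 1).const_mul I
  have hden : HasDerivAt (fun q : ℂ => 1 + q) 1 1 := (hasDerivAt_id (1 : ℂ)).const_add 1
  refine (hnum.fun_div hden (by norm_num)).congr_deriv ?_
  ring

lemma Fmap_pi_div_four :
    Fmap (Real.pi / 4) = fun w => sectorToLens (toRightHalfPlane w ^ (2⁻¹ : ℂ)) := by
  have hexp : (2 * (Real.pi / 4) / Real.pi : ℝ) = 2⁻¹ := by
    field_simp; ring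
  funext w
  rw [Fmap, Real.tan_pi_div_four, hexp, sectorToLens, toRightHalfPlane]
  push_cast
  ring

lemma Fmap_pi_div_four_zero : Fmap (Real.pi / 4) 0 = 0 := by
  simp [Fmap_pi_div_four, toRightHalfPlane_zero, sectorToLens]

lemma hasDerivAt_Fmap_pi_div_four_zero : HasDerivAt (Fmap (Real.pi / 4)) (1 / 2) 0 := by
  have hsqrt : HasDerivAt (fun w => toRightHalfPlane w ^ (2⁻¹ : ℂ)) I 0 := by
    refine (hasDerivAt_toRightHalfPlane_zero.cpow_const (c := 2⁻¹)
      (by simp [toRightHalfPlane_zero])).congr_deriv ?_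
    rw [toRightHalfPlane_zero, one_cpow]; ring
  have hval : toRightHalfPlane 0 ^ (2⁻¹ : ℂ) = 1 := by rw [toRightHalfPlane_zero, one_cpow]
  rw [Fmap_pi_div_four]
  refine (hasDerivAt_sectorToLens_one.comp_of_eq 0 hsqrt hval.symm).congr_deriv ?_
  rw [div_mul_eq_mul_div, neg_mul, I_mul_I, neg_neg]

lemma abs_im_lt_re_sqrt_toRightHalfPlane {w : ℂ} (hw : w ∈ ball (0 : ℂ) 1) :
    |(toRightHalfPlane w ^ (2⁻¹ : ℂ)).im| < (toRightHalfPlane w ^ (2⁻¹ : ℂ)).re :=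
  abs_im_lt_re_cpow_inv_two (re_toRightHalfPlane_pos (mem_ball_zero_iff.mp hw))

lemma differentiableOn_Fmap_pi_div_four :
    DifferentiableOn ℂ (Fmap (Real.pi / 4)) (ball 0 1) := by
  intro w hw
  have hw' : ‖w‖ < 1 := mem_ball_zero_iff.mp hw
  have hhalf : DifferentiableAt ℂ toRightHalfPlane w :=
    (by fun_prop : DifferentiableAt ℂ (fun w : ℂ => 1 + I * w) w).div (by fun_prop)
      (one_sub_I_mul_ne_zero hw')
  have hsqrt : DifferentiableAt ℂ (fun w => toRightHalfPlane w ^ (2⁻¹ : ℂ)) w :=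
    hhalf.cpow_const (mem_slitPlane_iff.mpr (Or.inl (re_toRightHalfPlane_pos hw')))
  have hq : 1 + toRightHalfPlane w ^ (2⁻¹ : ℂ) ≠ 0 :=
    one_add_ne_zero_of_re_pos ((abs_nonneg _).trans_lt (abs_im_lt_re_sqrt_toRightHalfPlane hw))
  rw [Fmap_pi_div_four]
  exact (((hsqrt.const_sub 1).const_mul I).div (hsqrt.const_add 1) hq).differentiableWithinAt

lemma mapsTo_Fmap_pi_div_four : Set.MapsTo (Fmap (Real.pi / 4)) (ball 0 1) (lens √2) := by
  intro w hw
  rw [Fmap_pi_div_four]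
  exact sectorToLens_mem_lens (abs_im_lt_re_sqrt_toRightHalfPlane hw)

theorem sqrt_two_optimal_general (γ : ℝ) (hγ : 1 < γ) (G : ℂ → ℂ)
    (hd : DifferentiableOn ℂ G (ball (0 : ℂ) 1))
    (h0 : G 0 = 0) (h1 : deriv G 0 = 1 / 2)
    (hmem : ∀ w ∈ ball (0 : ℂ) 1, G w ∈ lens γ) :
    Real.sqrt 2 ≤ γ ∧
    (Fmap (Real.pi / 4) 0 = 0 ∧ deriv (Fmap (Real.pi / 4)) 0 = 1 / 2 ∧
      DifferentiableOn ℂ (Fmap (Real.pi / 4)) (ball (0 : ℂ) 1) ∧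
      (∃ C : ℝ, ∀ w ∈ ball (0 : ℂ) 1, ‖Fmap (Real.pi / 4) w‖ ≤ C) ∧
      ∀ w ∈ ball (0 : ℂ) 1, Fmap (Real.pi / 4) w ∈ lens (Real.sqrt 2)) := by
  refine ⟨?_, Fmap_pi_div_four_zero, hasDerivAt_Fmap_pi_div_four_zero.deriv,
    differentiableOn_Fmap_pi_div_four,
    ⟨√2, fun w hw => (norm_lt_of_mem_lens (mapsTo_Fmap_pi_div_four hw)).le⟩,
    fun w hw => mapsTo_Fmap_pi_div_four hw⟩
  by_contra! hlt
  have hbound := norm_deriv_le_of_mapsTo_lens hγ hlt.le hd h0 hmem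
  rw [h1, norm_div, norm_one, Complex.norm_ofNat, div_le_div_iff_of_pos_right two_pos,
    Real.one_le_sqrt] at hbound
  nlinarith [Real.sq_sqrt (zero_le_two : (0 : ℝ) ≤ 2), Real.sqrt_nonneg 2]

theorem sqrt_two_optimal (γ : ℝ) (hγ : 1 < γ) (G : ℂ → ℂ)
    (hd : DifferentiableOn ℂ G (ball (0 : ℂ) 1))
    (hbdd : ∃ C : ℝ, ∀ w ∈ ball (0 : ℂ) 1, ‖G w‖ ≤ C)
    (h0 : G 0 = 0) (h1 : deriv G 0 = 1 / 2)
    (hmem : ∀ w ∈ ball (0 : ℂ) 1, G w ∈ lens γ) :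
    Real.sqrt 2 ≤ γ ∧
    (Fmap (Real.pi / 4) 0 = 0 ∧ deriv (Fmap (Real.pi / 4)) 0 = 1 / 2 ∧
      DifferentiableOn ℂ (Fmap (Real.pi / 4)) (ball (0 : ℂ) 1) ∧
      (∃ C : ℝ, ∀ w ∈ ball (0 : ℂ) 1, ‖Fmap (Real.pi / 4) w‖ ≤ C) ∧
      ∀ w ∈ ball (0 : ℂ) 1, Fmap (Real.pi / 4) w ∈ lens (Real.sqrt 2)) :=
  sqrt_two_optimal_general γ hγ G hd h0 h1 hmem
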